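/- A loop Q is a C loop (satisfies both x(x·yz) = (x·xy)z and (zy·x)x = z(yx·x)) if and only if Q satisfies the identity (yx·x)z = y(x·xz) for all x,y,z. -/

import Mathlib

/-- A loop: binary operation with two-sided identity and unique divisions. -/
class Loop (Q : Type*) extends Mul Q, One Q where
  ld : Q → Q → Q   -- left division: `ld x y = x \ y`
  rd : Q → Q → Q   -- right division: `rd x y = x / y`
  one_mul : ∀ x : Q, 1 * x = x
  mul_one : ∀ x : Q, x * 1 = x
  mul_ld : ∀ x y : Q, x * ld x y = y
  ld_mul : ∀ x y : Q, ld x (x * y) = y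
  rd_mul : ∀ x y : Q, rd x y * y = x
  mul_rd : ∀ x y : Q, rd (x * y) y = x

namespace Loop
variable {Q : Type*} [Loop Q]
/-- left inverse `x^λ = 1 / x` -/
def linv (x : Q) : Q := rd 1 x
/-- right inverse `x^ρ = x \ 1` -/
def rinv (x : Q) : Q := ld x 1
/-- left nucleus -/
def Nl (Q : Type*) [Loop Q] : Set Q := {a | ∀ x y : Q, a * (x * y) = (a * x) * y}
/-- middle nucleus -/
def Nm (Q : Type*) [Loop Q] : Set Q := {a | ∀ x y : Q, x * (a * y) = (x * a) * y}
/-- right nucleus -/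
def Nr (Q : Type*) [Loop Q] : Set Q := {a | ∀ x y : Q, (x * y) * a = x * (y * a)}
/-- the nucleus -/
def N (Q : Type*) [Loop Q] : Set Q := Nl Q ∩ Nm Q ∩ Nr Q
/-- `S` is a subloop -/
def IsSubloop (S : Set Q) : Prop :=
  (1 : Q) ∈ S ∧ ∀ a ∈ S, ∀ b ∈ S, a * b ∈ S ∧ ld a b ∈ S ∧ rd a b ∈ S
/-- normality of a subloop via the standard equational characterization -/
def IsNormal (S : Set Q) : Prop :=
  IsSubloop S ∧ ∀ x y : Q,
    (x * ·) '' S = (· * x) '' S ∧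
    (· * y) '' ((x * ·) '' S) = (x * ·) '' ((· * y) '' S) ∧
    (x * ·) '' ((y * ·) '' S) = ((x * y) * ·) '' S
end Loop

/-!
LC says that squares lie in the left nucleus, RC that they lie in the right nucleus, and the
C identity `(yx·x)z = y(x·xz)` that they lie in the middle nucleus; in each case `xx·z = x·xz` or
`zx·x = z·xx` follows by putting `1` for a variable. LC and RC give the left and right inverse
properties, and so does the C identity. In a loop with the inverse property the three nuclei
coincide, since inversion is an antiautomorphism exchanging the left and right nucleus; this
converts one description of squares into the other.
-/

namespace Loop

variable {Q : Type*} [Loop Q]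

theorem mul_left_cancel {x y z : Q} (h : x * y = x * z) : y = z := by
  rw [← Loop.ld_mul x y, h, Loop.ld_mul]

theorem mul_right_cancel {x y z : Q} (h : y * x = z * x) : y = z := by
  rw [← Loop.mul_rd y x, h, Loop.mul_rd]

theorem linv_mul (x : Q) : linv x * x = 1 := Loop.rd_mul 1 x

theorem mul_rinv (x : Q) : x * rinv x = 1 := Loop.mul_ld x 1

structure IsIPInverse (ι : Q → Q) : Prop where
  inv_mul_cancel_left : ∀ x y : Q, ι x * (x * y) = y
  mul_inv_cancel_right : ∀ x y : Q, y * x * ι x = y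

namespace IsIPInverse

variable {ι κ : Q → Q} {a : Q}

theorem of_left_of_right (hl : ∀ x y : Q, ι x * (x * y) = y)
    (hr : ∀ x y : Q, y * x * κ x = y) : IsIPInverse ι := by
  have hικ : ∀ x, ι x = κ x := fun x => by
    have hκ : x * κ x = 1 := by simpa only [Loop.one_mul] using hr x 1
    simpa only [hκ, Loop.mul_one] using hl x (κ x)
  exact ⟨hl, fun x y => by rw [hικ]; exact hr x y⟩

theorem inv_mul_cancel (h : IsIPInverse ι) (x : Q) : ι x * x = 1 := by
  simpa only [Loop.mul_one] using h.inv_mul_cancel_left x 1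

theorem inv_inv (h : IsIPInverse ι) (x : Q) : ι (ι x) = x :=
  calc ι (ι x) = ι (ι x) * (ι x * x) := by rw [h.inv_mul_cancel, Loop.mul_one]
    _ = x := h.inv_mul_cancel_left _ _

theorem inv_injective (h : IsIPInverse ι) : Function.Injective ι :=
  Function.LeftInverse.injective h.inv_inv

theorem mul_inv_cancel_left (h : IsIPInverse ι) (x y : Q) : x * (ι x * y) = y := by
  simpa only [h.inv_inv] using h.inv_mul_cancel_left (ι x) y

theorem inv_mul_cancel_right (h : IsIPInverse ι) (x y : Q) : y * ι x * x = y := by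
  simpa only [h.inv_inv] using h.mul_inv_cancel_right (ι x) y

theorem mul_inv_rev (h : IsIPInverse ι) (x y : Q) : ι (x * y) = ι y * ι x := by
  have hx : ι (x * y) * x = ι y :=
    calc ι (x * y) * x = ι (x * y) * (x * y * ι y) := by rw [h.mul_inv_cancel_right]
      _ = ι y := h.inv_mul_cancel_left _ _
  rw [← hx, h.mul_inv_cancel_right]

theorem inv_mem_Nl (h : IsIPInverse ι) (ha : a ∈ Nl Q) : ι a ∈ Nl Q := by
  intro x y
  calc ι a * (x * y) = ι a * (a * (ι a * x) * y) := by rw [h.mul_inv_cancel_left]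
    _ = ι a * (a * (ι a * x * y)) := by rw [ha (ι a * x) y]
    _ = ι a * x * y := h.inv_mul_cancel_left _ _

theorem inv_mem_Nm (h : IsIPInverse ι) (ha : a ∈ Nm Q) : ι a ∈ Nm Q := by
  intro x y
  apply h.inv_injective
  simp only [h.mul_inv_rev, h.inv_inv]
  exact (ha _ _).symm

theorem mem_Nm_of_mem_Nl (h : IsIPInverse ι) (ha : a ∈ Nl Q) : a ∈ Nm Q := by
  intro x y
  have key : ι a * (ι x * (x * a * y)) = y := by
    rw [h.inv_mem_Nl ha, ← h.mul_inv_rev, h.inv_mul_cancel_left]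
  calc x * (a * y) = x * (a * (ι a * (ι x * (x * a * y)))) := by rw [key]
    _ = x * a * y := by rw [h.mul_inv_cancel_left, h.mul_inv_cancel_left]

theorem mem_Nl_of_mem_Nm (h : IsIPInverse ι) (ha : a ∈ Nm Q) : a ∈ Nl Q := by
  intro x y
  have key : ι x * (ι a * (a * x * y)) = y := by
    rw [h.inv_mem_Nm ha, ← h.mul_inv_rev, h.inv_mul_cancel_left]
  calc a * (x * y) = a * (x * (ι x * (ι a * (a * x * y)))) := by rw [key]
    _ = a * x * y := by rw [h.mul_inv_cancel_left, h.mul_inv_cancel_left]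

theorem mem_Nr_of_mem_Nm (h : IsIPInverse ι) (ha : a ∈ Nm Q) : a ∈ Nr Q := by
  intro x y
  have key : x * (y * a) * ι a * ι y = x := by
    rw [← h.inv_mem_Nm ha, ← h.mul_inv_rev, h.mul_inv_cancel_right]
  calc x * y * a = x * (y * a) * ι a * ι y * y * a := by rw [key]
    _ = x * (y * a) := by rw [h.inv_mul_cancel_right, h.inv_mul_cancel_right]

end IsIPInverse

def IsLC (Q : Type*) [Loop Q] : Prop := ∀ x y z : Q, x * (x * (y * z)) = (x * (x * y)) * z

def IsRC (Q : Type*) [Loop Q] : Prop := ∀ x y z : Q, ((z * y) * x) * x = z * ((y * x) * x)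

def IsC (Q : Type*) [Loop Q] : Prop := ∀ x y z : Q, ((y * x) * x) * z = y * (x * (x * z))

namespace IsRC

theorem mul_mul_self (h : IsRC Q) (z x : Q) : z * x * x = z * (x * x) := by
  simpa only [Loop.one_mul, Loop.mul_one] using h x 1 z

theorem mul_linv_cancel_right (h : IsRC Q) (x y : Q) : y * x * linv x = y := by
  have hx : ∀ v, v * linv x * x = v := fun v =>
    mul_right_cancel (by rw [h, linv_mul, Loop.one_mul])
  exact mul_right_cancel (hx (y * x))

end IsRC

namespace IsLC

theorem mul_self_mul (h : IsLC Q) (x z : Q) : x * x * z = x * (x * z) := by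
  simpa only [Loop.one_mul, Loop.mul_one] using (h x 1 z).symm

theorem mul_self_mem_Nl (h : IsLC Q) (x : Q) : x * x ∈ Nl Q := by
  intro y z
  rw [h.mul_self_mul, h.mul_self_mul]
  exact h x y z

theorem rinv_mul_cancel_left (h : IsLC Q) (x y : Q) : rinv x * (x * y) = y := by
  have hx : ∀ v, x * (rinv x * v) = v := fun v =>
    mul_left_cancel (by rw [h, mul_rinv, Loop.mul_one])
  exact mul_left_cancel (hx (x * y))

theorem isC (hl : IsLC Q) (hr : IsRC Q) : IsC Q := by
  have hip : IsIPInverse (rinv : Q → Q) :=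
    .of_left_of_right hl.rinv_mul_cancel_left hr.mul_linv_cancel_right
  intro x y z
  calc y * x * x * z = y * (x * x) * z := by rw [hr.mul_mul_self]
    _ = y * (x * x * z) := (hip.mem_Nm_of_mem_Nl (hl.mul_self_mem_Nl x) y z).symm
    _ = y * (x * (x * z)) := by rw [hl.mul_self_mul]

end IsLC

namespace IsC

theorem mul_self_mul (h : IsC Q) (x z : Q) : x * x * z = x * (x * z) := by
  simpa only [Loop.one_mul] using h x 1 z

theorem mul_mul_self (h : IsC Q) (y x : Q) : y * x * x = y * (x * x) := by
  simpa only [Loop.mul_one] using h x y 1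

theorem mul_self_mem_Nm (h : IsC Q) (x : Q) : x * x ∈ Nm Q := by
  intro y z
  rw [h.mul_self_mul, ← h.mul_mul_self]
  exact (h x y z).symm

theorem isIPInverse_linv (h : IsC Q) : IsIPInverse (linv : Q → Q) := by
  refine .of_left_of_right (κ := rinv) (fun x w => ?_) (fun x v => ?_)
  · simpa only [linv_mul, Loop.one_mul, Loop.mul_ld] using (h x (linv x) (ld x w)).symm
  · simpa only [Loop.rd_mul, mul_rinv, Loop.mul_one] using h x (rd v x) (rinv x)

theorem isLC (h : IsC Q) : IsLC Q := by
  intro x y z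
  calc x * (x * (y * z)) = x * x * (y * z) := by rw [h.mul_self_mul]
    _ = x * x * y * z := h.isIPInverse_linv.mem_Nl_of_mem_Nm (h.mul_self_mem_Nm x) y z
    _ = x * (x * y) * z := by rw [h.mul_self_mul]

theorem isRC (h : IsC Q) : IsRC Q := by
  intro x y z
  calc z * y * x * x = z * y * (x * x) := by rw [h.mul_mul_self]
    _ = z * (y * (x * x)) := h.isIPInverse_linv.mem_Nr_of_mem_Nm (h.mul_self_mem_Nm x) z y
    _ = z * (y * x * x) := by rw [h.mul_mul_self]

end IsC

end Loop

open Loop in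
theorem stmt6 {Q : Type*} [Loop Q] :
    ((∀ x y z : Q, x * (x * (y * z)) = (x * (x * y)) * z) ∧
     (∀ x y z : Q, ((z * y) * x) * x = z * ((y * x) * x))) ↔
      (∀ x y z : Q, ((y * x) * x) * z = y * (x * (x * z))) :=
  ⟨fun ⟨hl, hr⟩ => IsLC.isC hl hr, fun h => ⟨IsC.isLC h, IsC.isRC h⟩⟩
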